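/- arXiv:2512.06063 — 5 statements merged into one kernel-verified Lean document; each statement's English description precedes it below -/
import Mathlib

section
/- Let p be a prime and R → A a homomorphism of F_p-algebras. If the relative Frobenius map F_{A/R} : A ⊗_R F_*R → F_*A, a ⊗ r ↦ a^p·r, is surjective, then A is formally unramified over R, i.e. Ω_{A/R} = 0. -/
open TensorProduct

/-- `FStar p R` is `R` viewed as an `R`-algebra via the Frobenius `r ↦ r ^ p`. -/
def FStar (_p : ℕ) (R : Type*) : Type _ := R

instance (p : ℕ) (R : Type*) [CommRing R] : CommRing (FStar p R) :=
  inferInstanceAs (CommRing R)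

noncomputable instance (p : ℕ) (R A : Type*) [CommRing R] [CommRing A] [Algebra R A]
    [ExpChar A p] : Algebra R (FStar p A) :=
  ((frobenius A p).comp (algebraMap R A)).toAlgebra

/-- Frobenius of `A`, as a map `A →ₐ[R] FStar p A`. -/
noncomputable def frobAlgHom (p : ℕ) (R A : Type*) [CommRing R] [CommRing A] [Algebra R A]
    [ExpChar A p] : A →ₐ[R] FStar p A :=
  { frobenius A p with commutes' := fun _ => rfl }

/-- The structure map `F_*R → F_*A`, as a map of `R`-algebras. -/
noncomputable def fstarAlgHom (p : ℕ) (R A : Type*) [CommRing R] [CommRing A] [Algebra R A]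
    [ExpChar R p] [ExpChar A p] : FStar p R →ₐ[R] FStar p A :=
  { (algebraMap R A : R →+* A) with
    commutes' := fun r => by
      show (algebraMap R A) (frobenius R p (algebraMap R R r)) = frobenius A p (algebraMap R A r)
      simp [frobenius_def, map_pow] }

/-- The relative Frobenius `A ⊗[R] F_*R → F_*A`, `a ⊗ r ↦ a^p · r`. -/
noncomputable def relFrob (p : ℕ) (R A : Type*) [CommRing R] [CommRing A] [Algebra R A]
    [ExpChar R p] [ExpChar A p] : (A ⊗[R] FStar p R) →ₐ[R] FStar p A :=
  Algebra.TensorProduct.productMap (frobAlgHom p R A) (fstarAlgHom p R A)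

/-! Every `R`-derivation of `A` kills `p`-th powers (as `p = 0` in `A`) and scalars, hence the
whole image of the relative Frobenius. If that image is all of `A`, the universal derivation
vanishes, and so does `Ω_{A/R}`, which is spanned by its image. -/

theorem Derivation.map_pow_char {R A M : Type*} [CommSemiring R] [CommSemiring A] [Algebra R A]
    [AddCommMonoid M] [Module A M] [Module R M]
    (D : Derivation R A M) (p : ℕ) [CharP A p] (a : A) : D (a ^ p) = 0 := by
  rw [D.leibniz_pow, ← Nat.cast_smul_eq_nsmul A, CharP.cast_eq_zero, zero_smul]

theorem Derivation.map_pow_char_mul_algebraMap {R A M : Type*} [CommSemiring R] [CommSemiring A]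
    [Algebra R A] [AddCommMonoid M] [Module A M] [Module R M]
    (D : Derivation R A M) (p : ℕ) [CharP A p] (a : A) (r : R) :
    D (a ^ p * algebraMap R A r) = 0 := by
  rw [D.leibniz, D.map_algebraMap, D.map_pow_char p, smul_zero, smul_zero, add_zero]

theorem Derivation.map_relFrob (p : ℕ) [Fact p.Prime] {R A M : Type*} [CommRing R] [CommRing A]
    [Algebra R A] [CharP R p] [CharP A p] [AddCommMonoid M] [Module A M] [Module R M]
    (D : Derivation R A M) (y : A ⊗[R] FStar p R) :
    D (relFrob p R A y) = 0 := by
  induction y using TensorProduct.induction_on with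
  | zero => exact D.map_zero
  | tmul a r => exact D.map_pow_char_mul_algebraMap p a r
  | add u v hu hv =>
    -- the addition of `FStar p A` is only defeq to that of `A`, so `D.map_add` cannot be rewritten
    have h := D.map_add (relFrob p R A u) (relFrob p R A v)
    rw [hu, hv, add_zero] at h
    exact (congrArg D (map_add (relFrob p R A) u v)).trans h

theorem KaehlerDifferential.subsingleton_of_forall_D_eq_zero {R S : Type*} [CommRing R]
    [CommRing S] [Algebra R S] (h : ∀ x, KaehlerDifferential.D R S x = 0) :
    Subsingleton Ω[S⁄R] := by
  suffices (⊤ : Submodule S Ω[S⁄R]) ≤ ⊥ from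
    (subsingleton_iff_forall_eq 0).mpr fun y ↦ this trivial
  rw [← KaehlerDifferential.span_range_derivation, Submodule.span_le]
  rintro _ ⟨x, rfl⟩
  exact h x

/-- If the relative Frobenius `A ⊗_R F_*R → F_*A` is surjective, then `A` is
formally unramified over `R`, i.e. `Ω_{A/R} = 0`. -/
theorem stmt_0 (p : ℕ) [Fact p.Prime] (R A : Type*) [CommRing R] [CommRing A] [Algebra R A]
    [CharP R p] [CharP A p]
    (hsurj : Function.Surjective (relFrob p R A)) :
    Subsingleton (Ω[A⁄R]) := by
  refine KaehlerDifferential.subsingleton_of_forall_D_eq_zero fun x ↦ ?_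
  obtain ⟨y, rfl⟩ := hsurj x
  exact (KaehlerDifferential.D R A).map_relFrob p y
end

section
/- Let p be a prime, R → A a homomorphism of F_p-algebras, B an A-algebra, π : C → B a surjective R-algebra homomorphism with kernel b satisfying b^[p] = 0 (i.e. x^p = 0 for all x ∈ b and the ideal generated by p-th powers of b is zero). Then any two R-algebra homomorphisms A → C lifting the structure map A → B are equal, provided the relative Frobenius A ⊗_R F_*R → F_*A is surjective. -/
open TensorProduct

/-!
Surjectivity of the relative Frobenius says that `A` is generated as an `R`-algebra by `p`-th
powers. Two lifts `ϑ₁, ϑ₂` differ by elements of `b`, and since `p = 0` in `C`,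
`ϑ₁ a ^ p - ϑ₂ a ^ p = (ϑ₁ a - ϑ₂ a) ^ p = 0`; so they agree on `p`-th powers, hence everywhere.
-/

theorem pow_eq_pow_of_map_eq {C B : Type*} [CommRing C] [CommRing B] {p : ℕ} (hp : p.Prime)
    (hpC : (p : C) = 0) (π : C →+* B) (hb : ∀ x ∈ RingHom.ker π, x ^ p = 0) {x y : C}
    (h : π x = π y) : x ^ p = y ^ p := by
  have hker : x - y ∈ RingHom.ker π := by rw [RingHom.mem_ker, map_sub, h, sub_self]
  calc x ^ p = (y + (x - y)) ^ p := by rw [add_sub_cancel]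
    _ = y ^ p := by rw [add_pow_prime_eq hp, hb _ hker, hpC]; ring

theorem adjoin_range_pow_eq_top_of_surjective_relFrob {p : ℕ} {R A : Type*} [CommRing R]
    [CommRing A] [Algebra R A] [ExpChar R p] [ExpChar A p]
    (hsurj : Function.Surjective (relFrob p R A)) :
    Algebra.adjoin R (Set.range fun a : A ↦ a ^ p) = ⊤ := by
  refine Algebra.eq_top_iff.2 fun a ↦ ?_
  obtain ⟨t, rfl⟩ := hsurj a
  induction t using TensorProduct.induction_on with
  | zero => exact zero_mem _
  | tmul a r =>
    show a ^ p * algebraMap R A (show R from r) ∈ _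
    exact mul_mem (Algebra.subset_adjoin ⟨a, rfl⟩) (Subalgebra.algebraMap_mem _ _)
  | add s t hs ht => rw [map_add]; exact add_mem hs ht

theorem stmt_1_general (p : ℕ) [Fact p.Prime] (R A B C : Type*) [CommRing R] [CommRing A] [CommRing B]
    [CommRing C] [Algebra R A] [Algebra R B] [Algebra R C] [Algebra A B] [IsScalarTower R A B]
    [CharP R p] [CharP A p]
    (hsurj : Function.Surjective (relFrob p R A))
    (π : C →ₐ[R] B)
    (hb : ∀ x ∈ RingHom.ker (π : C →+* B), x ^ p = 0)
    (ϑ₁ ϑ₂ : A →ₐ[R] C)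
    (h₁ : π.comp ϑ₁ = IsScalarTower.toAlgHom R A B)
    (h₂ : π.comp ϑ₂ = IsScalarTower.toAlgHom R A B) :
    ϑ₁ = ϑ₂ := by
  have hpC : (p : C) = 0 := by
    rw [← map_natCast (algebraMap R C) p, CharP.cast_eq_zero R p, map_zero]
  refine AlgHom.ext_of_adjoin_eq_top (adjoin_range_pow_eq_top_of_surjective_relFrob hsurj) ?_
  rintro _ ⟨a, rfl⟩
  simp only [map_pow]
  exact pow_eq_pow_of_map_eq Fact.out hpC (π : C →+* B) hb
    ((AlgHom.congr_fun h₁ a).trans (AlgHom.congr_fun h₂ a).symm)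

/-- if the relative Frobenius of `R → A` is surjective, then any two `R`-algebra
lifts `A → C` of the structure map `A → B` along a surjection `π : C → B` whose kernel `b`
satisfies `b^[p] = 0` are equal. -/
theorem stmt_1 (p : ℕ) [Fact p.Prime] (R A B C : Type*) [CommRing R] [CommRing A] [CommRing B]
    [CommRing C] [Algebra R A] [Algebra R B] [Algebra R C] [Algebra A B] [IsScalarTower R A B]
    [CharP R p] [CharP A p]
    (hsurj : Function.Surjective (relFrob p R A))
    (π : C →ₐ[R] B) (hπ : Function.Surjective π)
    (hb : ∀ x ∈ RingHom.ker (π : C →+* B), x ^ p = 0)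
    (ϑ₁ ϑ₂ : A →ₐ[R] C)
    (h₁ : π.comp ϑ₁ = IsScalarTower.toAlgHom R A B)
    (h₂ : π.comp ϑ₂ = IsScalarTower.toAlgHom R A B) :
    ϑ₁ = ϑ₂ :=
  stmt_1_general p R A B C hsurj π hb ϑ₁ ϑ₂ h₁ h₂
end

section
/- Let p be a prime, R → A a homomorphism of F_p-algebras, π : C → B a surjective R-algebra map with kernel b satisfying b^[p] = 0, where B is an A-algebra, and let ϑ₀ : A → C be an R-algebra homomorphism lifting A → B. Then for any other R-algebra lift ϑ : A → C of A → B, the difference φ = ϑ − ϑ₀ satisfies φ(a^p a') = ϑ(a)^p φ(a') for all a, a' ∈ A; in particular φ is additive and semilinear over p-th powers. -/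
/-- given two `R`-algebra lifts `ϑ, ϑ₀ : A → C` of the structure map `A → B`
along a surjection `π : C → B` whose kernel `b` satisfies `b^[p] = 0`, the difference
`φ = ϑ − ϑ₀` satisfies `φ(a^p a') = ϑ(a)^p φ(a')` for all `a, a' ∈ A`. -/
theorem stmt_2 (p : ℕ) [Fact p.Prime] (R A B C : Type*) [CommRing R] [CommRing A] [CommRing B]
    [CommRing C] [Algebra R A] [Algebra R B] [Algebra R C] [Algebra A B] [IsScalarTower R A B]
    [CharP R p] [CharP A p]
    (π : C →ₐ[R] B) (hπ : Function.Surjective π)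
    (hb : ∀ x ∈ RingHom.ker (π : C →+* B), x ^ p = 0)
    (ϑ ϑ₀ : A →ₐ[R] C)
    (h : π.comp ϑ = IsScalarTower.toAlgHom R A B)
    (h₀ : π.comp ϑ₀ = IsScalarTower.toAlgHom R A B) :
    ∀ a a' : A, ϑ (a ^ p * a') - ϑ₀ (a ^ p * a') = ϑ a ^ p * (ϑ a' - ϑ₀ a') := by
  have hpC : (p : C) = 0 := by
    have : (p : C) = algebraMap R C (p : R) := (map_natCast _ p).symm
    rw [this, CharP.cast_eq_zero R p, map_zero]
  obtain ⟨q, hq⟩ := CharP.exists C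
  have hqp : q ∣ p := (CharP.cast_eq_zero_iff C q p).mp hpC
  rcases (Nat.dvd_prime (Fact.out : p.Prime)).mp hqp with h1 | hq'
  · haveI : CharP C 1 := h1 ▸ hq
    haveI : Subsingleton C := CharP.CharOne.subsingleton
    intro a a'
    exact Subsingleton.elim _ _
  · haveI : CharP C p := hq' ▸ hq
    intro a a'
    have hker : ϑ a - ϑ₀ a ∈ RingHom.ker (π : C →+* B) := by
      have h1 : π (ϑ a) = algebraMap A B a := congrArg (fun f => f a) h
      have h2 : π (ϑ₀ a) = algebraMap A B a := congrArg (fun f => f a) h₀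
      show π (ϑ a - ϑ₀ a) = 0
      rw [map_sub, h1, h2, sub_self]
    have hpow : ϑ a ^ p = ϑ₀ a ^ p := by
      have h0 := hb _ hker
      rw [sub_pow_char, sub_eq_zero] at h0
      exact h0
    calc ϑ (a ^ p * a') - ϑ₀ (a ^ p * a')
        = ϑ a ^ p * ϑ a' - ϑ₀ a ^ p * ϑ₀ a' := by rw [map_mul, map_mul, map_pow, map_pow]
      _ = ϑ a ^ p * ϑ a' - ϑ a ^ p * ϑ₀ a' := by rw [hpow]
      _ = ϑ a ^ p * (ϑ a' - ϑ₀ a') := by ring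
end

section
/- Let p be a prime and f : R → A a ring homomorphism of F_p-algebras. If the relative Frobenius F_{A/R} : A ⊗_R F_*R → F_*A admits a left inverse as a ring homomorphism (equivalently F_{A/R} is a split surjection of rings), and the e-th relative Frobenius F^e_{A/R} : A ⊗_{R,F^e} R → F^e_*A is an isomorphism for some e ≥ 1, then F_{A/R} itself is an isomorphism. -/
open TensorProduct

/-- `FStarE p e R` is `R` viewed as an `R`-algebra via the `e`-th iterate of Frobenius. -/
def FStarE (_p _e : ℕ) (R : Type*) : Type _ := R

instance (p e : ℕ) (R : Type*) [CommRing R] : CommRing (FStarE p e R) :=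
  inferInstanceAs (CommRing R)

noncomputable instance (p e : ℕ) (R A : Type*) [CommRing R] [CommRing A] [Algebra R A]
    [ExpChar A p] : Algebra R (FStarE p e A) :=
  ((iterateFrobenius A p e).comp (algebraMap R A)).toAlgebra

/-- The `e`-th iterate of Frobenius of `A`, as a map `A →ₐ[R] FStarE p e A`. -/
noncomputable def frobAlgHomE (p e : ℕ) (R A : Type*) [CommRing R] [CommRing A] [Algebra R A]
    [ExpChar A p] : A →ₐ[R] FStarE p e A :=
  { iterateFrobenius A p e with commutes' := fun _ => rfl }

/-- The structure map `F^e_*R → F^e_*A`, as a map of `R`-algebras. -/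
noncomputable def fstarAlgHomE (p e : ℕ) (R A : Type*) [CommRing R] [CommRing A] [Algebra R A]
    [ExpChar R p] [ExpChar A p] : FStarE p e R →ₐ[R] FStarE p e A :=
  { (algebraMap R A : R →+* A) with
    commutes' := fun r => by
      show (algebraMap R A) (iterateFrobenius R p e (algebraMap R R r))
          = iterateFrobenius A p e (algebraMap R A r)
      simp [iterateFrobenius_def, map_pow] }

/-- The `e`-th relative Frobenius `A ⊗[R] F^e_*R → F^e_*A`, `a ⊗ r ↦ a^{p^e} · r`. -/
noncomputable def relFrobE (p e : ℕ) (R A : Type*) [CommRing R] [CommRing A] [Algebra R A]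
    [ExpChar R p] [ExpChar A p] : (A ⊗[R] FStarE p e R) →ₐ[R] FStarE p e A :=
  Algebra.TensorProduct.productMap (frobAlgHomE p e R A) (fstarAlgHomE p e R A)

/-! Injectivity of `F_{A/R}` is immediate from the left inverse. For surjectivity, since
`a ^ p ^ e * r = (a ^ p ^ (e - 1)) ^ p * r`, every value of `F^e_{A/R}` is already a value of
`F_{A/R}`, so surjectivity of `F^e_{A/R}` passes to `F_{A/R}`. -/

section RelativeFrobenius

variable (p : ℕ) (R A : Type*) [CommRing R] [CommRing A] [Algebra R A] [ExpChar R p]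
  [ExpChar A p]

theorem relFrob_tmul (a : A) (r : R) :
    (relFrob p R A (a ⊗ₜ (r : FStar p R)) : A) = a ^ p * algebraMap R A r :=
  rfl

theorem relFrobE_tmul (e : ℕ) (a : A) (r : R) :
    (relFrobE p e R A (a ⊗ₜ (r : FStarE p e R)) : A) = a ^ p ^ e * algebraMap R A r :=
  rfl

theorem relFrobE_tmul_eq_relFrob_tmul {e : ℕ} (he : 1 ≤ e) (a : A) (r : R) :
    (relFrobE p e R A (a ⊗ₜ (r : FStarE p e R)) : A)
      = relFrob p R A ((a ^ p ^ (e - 1)) ⊗ₜ (r : FStar p R)) := by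
  rw [relFrobE_tmul, relFrob_tmul, ← pow_mul, ← pow_succ, Nat.sub_add_cancel he]

theorem exists_relFrob_eq_relFrobE {e : ℕ} (he : 1 ≤ e) (t : A ⊗[R] FStarE p e R) :
    ∃ s : A ⊗[R] FStar p R, (relFrob p R A s : A) = relFrobE p e R A t := by
  induction t using TensorProduct.induction_on with
  | zero => exact ⟨0, by simp only [map_zero]; rfl⟩
  | tmul a r => exact ⟨_, (relFrobE_tmul_eq_relFrob_tmul p R A he a r).symm⟩
  | add u v hu hv =>
    obtain ⟨s, hs⟩ := hu
    obtain ⟨s', hs'⟩ := hv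
    exact ⟨s + s', by rw [map_add, map_add]; exact congrArg₂ (· + ·) hs hs'⟩

theorem relFrob_surjective_of_relFrobE_surjective {e : ℕ} (he : 1 ≤ e)
    (hsurj : Function.Surjective (relFrobE p e R A)) :
    Function.Surjective (relFrob p R A) := by
  intro x
  obtain ⟨t, rfl⟩ := hsurj (x : FStarE p e A)
  exact exists_relFrob_eq_relFrobE p R A he t

end RelativeFrobenius

/-- if the relative Frobenius of `R → A` admits a left inverse as a ring
homomorphism and the `e`-th relative Frobenius is an isomorphism for some `e ≥ 1`, then the
relative Frobenius itself is an isomorphism. -/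
theorem stmt_4 (p : ℕ) [Fact p.Prime] (R A : Type*) [CommRing R] [CommRing A] [Algebra R A]
    [CharP R p] [CharP A p]
    (hsplit : ∃ g : FStar p A →+* A ⊗[R] FStar p R,
      g.comp (relFrob p R A).toRingHom = RingHom.id _)
    (he : ∃ e ≥ 1, Function.Bijective (relFrobE p e R A)) :
    Function.Bijective (relFrob p R A) := by
  obtain ⟨g, hg⟩ := hsplit
  obtain ⟨e, he1, hbij⟩ := he
  exact ⟨Function.LeftInverse.injective (g := g) (RingHom.congr_fun hg),
    relFrob_surjective_of_relFrobE_surjective p R A he1 hbij.2⟩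
end

section
/- Let R = F_p[t^{a/2^b} : a, b ∈ ℤ_{>0}] and a the ideal generated by all t^{a/2^b}. Then a is not a pure ideal: there is no y ∈ a with t = y·t. Consequently the quotient R → R/a ≅ F_p is not flat. -/
/-!
Every element of `dyadicIdeal p` has zero constant coefficient: the nonnegative dyadic rationals
have no nonzero additive units, so the coefficient at `0` is a ring homomorphism killing each
generator `t^m`, `m ≠ 0`. By cancellation the coefficient of `t` in `y * t` is the constant
coefficient of `y`, so `t = y * t` would give `1 = 0`. A flat quotient would make the ideal pure,
and purity provides such a `y` for `t`.
-/

/-- The additive monoid of nonnegative dyadic rationals `{a/2^b : a, b ∈ ℕ}`. -/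
def dyadicMonoid : AddSubmonoid ℚ :=
  AddSubmonoid.closure (Set.range fun ab : ℕ × ℕ => ((ab.1 : ℚ) / 2 ^ ab.2))

/-- `R = 𝔽_p[t^{a/2^b} : a, b > 0]`, the monoid algebra of the nonnegative dyadic
rationals over `𝔽_p`. -/
abbrev DyadicRing (p : ℕ) : Type := AddMonoidAlgebra (ZMod p) dyadicMonoid

/-- The ideal `a = (t^{a/2^b} : a, b > 0)` generated by all `t^m` with `m > 0`. -/
noncomputable def dyadicIdeal (p : ℕ) : Ideal (DyadicRing p) :=
  Ideal.span {x | ∃ m : dyadicMonoid, (m : ℚ) ≠ 0 ∧ x = AddMonoidAlgebra.single m 1}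

theorem one_mem_dyadicMonoid : (1 : ℚ) ∈ dyadicMonoid :=
  AddSubmonoid.subset_closure ⟨(1, 0), by norm_num⟩

/-- The element `t = t^1` of `DyadicRing p`. -/
noncomputable def tDyadic (p : ℕ) : DyadicRing p :=
  AddMonoidAlgebra.single ⟨1, one_mem_dyadicMonoid⟩ 1

namespace AddMonoidAlgebra

variable {k M : Type*} [Semiring k] [AddCommMonoid M]

theorem coeff_zero_mul [Subsingleton (AddUnits M)] (x y : k[M]) :
    (x * y).coeff 0 = x.coeff 0 * y.coeff 0 := by
  classical
  induction x using AddMonoidAlgebra.induction_linear with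
  | single a r =>
    induction y using AddMonoidAlgebra.induction_linear with
    | single b s =>
      by_cases ha : a = 0 <;> by_cases hb : b = 0 <;> simp [single_mul_single, *]
    | zero => simp
    | add y₁ y₂ h₁ h₂ => simp [mul_add, h₁, h₂]
  | zero => simp
  | add x₁ x₂ h₁ h₂ => simp [add_mul, h₁, h₂]

variable (k M) in
@[simps]
def constantCoeff [Subsingleton (AddUnits M)] : k[M] →+* k where
  toFun x := x.coeff 0
  map_one' := by simp [one_def]
  map_mul' := coeff_zero_mul
  map_zero' := rfl
  map_add' x y := rfl

theorem coeff_mul_single_self [IsRightCancelAdd M] (x : k[M]) (m : M) (r : k) :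
    (x * single m r).coeff m = x.coeff 0 * r :=
  coeff_mul_single_eq_coeff_mul 0 fun _ _ => add_eq_right

end AddMonoidAlgebra

open AddMonoidAlgebra

theorem dyadicMonoid_le_nonneg : dyadicMonoid ≤ AddSubmonoid.nonneg ℚ := by
  rw [dyadicMonoid, AddSubmonoid.closure_le]
  rintro _ ⟨⟨a, b⟩, rfl⟩
  exact AddSubmonoid.mem_nonneg.mpr (by positivity)

instance : Subsingleton (AddUnits dyadicMonoid) :=
  subsingleton_of_forall_eq 0 fun u => AddUnits.ext <| Subtype.ext <|
    ((add_eq_zero_iff_of_nonneg (dyadicMonoid_le_nonneg u.val.2)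
      (dyadicMonoid_le_nonneg u.neg.2)).mp congr(Subtype.val $u.val_neg)).1

theorem dyadicIdeal_le_ker_constantCoeff (p : ℕ) :
    dyadicIdeal p ≤ RingHom.ker (constantCoeff (ZMod p) dyadicMonoid) := by
  refine Ideal.span_le.mpr ?_
  rintro _ ⟨m, hm, rfl⟩
  have : m ≠ 0 := fun h => hm (by simp [h])
  simp [coeff_single, this]

theorem not_exists_mem_dyadicIdeal_tDyadic_eq_mul (p : ℕ) [Nontrivial (ZMod p)] :
    ¬ ∃ y ∈ dyadicIdeal p, tDyadic p = y * tDyadic p := by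
  rintro ⟨y, hy, hyt⟩
  have hy0 : y.coeff 0 = 0 := dyadicIdeal_le_ker_constantCoeff p hy
  have hcoeff := congrArg (fun z : DyadicRing p => z.coeff ⟨1, one_mem_dyadicMonoid⟩) hyt
  simp [tDyadic, coeff_mul_single_self, hy0, coeff_single] at hcoeff

/-- in `R = 𝔽_p[t^{a/2^b}]` the augmentation ideal `a` is not pure: there is no
`y ∈ a` with `t = y·t`; consequently `R → R/a` is not flat. -/
theorem stmt_10 (p : ℕ) [Fact p.Prime] :
    (¬ ∃ y ∈ dyadicIdeal p, tDyadic p = y * tDyadic p) ∧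
      ¬ Module.Flat (DyadicRing p) (DyadicRing p ⧸ dyadicIdeal p) := by
  have h := not_exists_mem_dyadicIdeal_tDyadic_eq_mul p
  refine ⟨h, fun hflat => h ?_⟩
  obtain ⟨y, hy, hty⟩ := (dyadicIdeal p).exists_eq_mul_of_pure (x := tDyadic p)
    (Ideal.subset_span ⟨_, one_ne_zero, rfl⟩)
  exact ⟨y, hy, hty.trans (mul_comm _ _)⟩
end
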